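/- arXiv:2410.05637 — 2 statements merged into one kernel-verified Lean document; each statement's English description precedes it below -/
import Mathlib

section
/- If x₁ ~ N(μ₁, σ₁²) and x₂ ~ N(μ₂, σ₂²) are independent, then for any δ > 0, E[exp(−(x₁−x₂)²/δ²)] = δ · exp(−(μ₁−μ₂)²/(δ² + 2σ₁² + 2σ₂²)) / √(δ² + 2σ₁² + 2σ₂²). -/
/-!
Under the product of the two Gaussian laws, `x₁ - x₂` has law `N(μ₁ - μ₂, σ₁² + σ₂²)`, the
convolution of `N(μ₁, σ₁²)` with `N(-μ₂, σ₂²)`. Against a single Gaussian `N(m, v)`, the integral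
of `exp (-x² / s)` is computed by completing the square in the exponent of
`exp (-(x - m)² / 2v) * exp (-x² / s)` and evaluating the remaining Gaussian integral.
-/

open MeasureTheory ProbabilityTheory Real
open scoped NNReal

lemma MeasureTheory.Measure.map_sub_prod_eq_conv_map_neg {G : Type*} [SubNegMonoid G]
    [MeasurableSpace G] [MeasurableAdd₂ G] [MeasurableNeg G] (μ ν : Measure G)
    [SFinite μ] [SFinite ν] :
    (μ.prod ν).map (fun p ↦ p.1 - p.2) = μ ∗ ν.map (fun x ↦ -x) := by
  rw [Measure.conv, ← Measure.map_id (μ := μ),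
    Measure.map_prod_map _ _ measurable_id measurable_neg,
    Measure.map_map (by fun_prop) (by fun_prop), Measure.map_id]
  simp [Function.comp_def, sub_eq_add_neg]

lemma gaussianReal_prod_gaussianReal_map_sub (m₁ m₂ : ℝ) (v₁ v₂ : ℝ≥0) :
    ((gaussianReal m₁ v₁).prod (gaussianReal m₂ v₂)).map (fun p ↦ p.1 - p.2) =
      gaussianReal (m₁ - m₂) (v₁ + v₂) := by
  rw [Measure.map_sub_prod_eq_conv_map_neg, gaussianReal_map_neg,
    gaussianReal_conv_gaussianReal, sub_eq_add_neg]

lemma integral_exp_neg_sq_div_gaussianReal (m : ℝ) (v : ℝ≥0) {s : ℝ} (hs : 0 < s) :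
    ∫ x, exp (-x ^ 2 / s) ∂gaussianReal m v =
      √(s / (s + 2 * v)) * exp (-m ^ 2 / (s + 2 * v)) := by
  rcases eq_or_ne v 0 with rfl | hv
  · simp [div_self hs.ne']
  set A : ℝ := (s + 2 * v) / (2 * v * s) with hA
  set t : ℝ := m * s / (s + 2 * v) with ht
  have complete_square : ∀ x : ℝ, exp (-(x - m) ^ 2 / (2 * v)) * exp (-x ^ 2 / s) =
      exp (-m ^ 2 / (s + 2 * v)) * exp (-A * (x - t) ^ 2) := by
    intro x
    rw [← exp_add, ← exp_add, hA, ht]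
    congr 1
    field_simp
    ring
  have integrand : ∀ x : ℝ, gaussianPDFReal m v x * exp (-x ^ 2 / s) =
      (√(2 * π * v))⁻¹ * exp (-m ^ 2 / (s + 2 * v)) * exp (-A * (x - t) ^ 2) := by
    intro x
    rw [gaussianPDFReal, mul_assoc, complete_square]
    ring
  have normalizer : (√(2 * π * v))⁻¹ * √(π / A) = √(s / (s + 2 * v)) := by
    rw [← sqrt_inv, ← sqrt_mul (by positivity), hA]
    congr 1
    field_simp
  simp_rw [integral_gaussianReal_eq_integral_smul hv, smul_eq_mul, integrand]
  rw [integral_const_mul, integral_sub_right_eq_self (fun y ↦ exp (-A * y ^ 2)) t,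
    integral_gaussian, ← normalizer]
  ring

lemma integral_exp_neg_sq_sub_div_gaussianReal_prod (m₁ m₂ : ℝ) (v₁ v₂ : ℝ≥0) {s : ℝ}
    (hs : 0 < s) :
    ∫ p, exp (-(p.1 - p.2) ^ 2 / s) ∂(gaussianReal m₁ v₁).prod (gaussianReal m₂ v₂) =
      √(s / (s + 2 * v₁ + 2 * v₂)) * exp (-(m₁ - m₂) ^ 2 / (s + 2 * v₁ + 2 * v₂)) := by
  rw [← integral_map (f := fun x ↦ exp (-x ^ 2 / s)) (by fun_prop) (by fun_prop),
    gaussianReal_prod_gaussianReal_map_sub, integral_exp_neg_sq_div_gaussianReal _ _ hs,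
    NNReal.coe_add, mul_add, ← add_assoc]

theorem gaussian_expectation_rbf_general (μ₁ μ₂ σ₁ σ₂ δ : ℝ)
    (hδ : 0 < δ) :
    ∫ p : ℝ × ℝ, Real.exp (-(p.1 - p.2) ^ 2 / δ ^ 2)
        ∂((gaussianReal μ₁ ⟨σ₁ ^ 2, sq_nonneg σ₁⟩).prod
          (gaussianReal μ₂ ⟨σ₂ ^ 2, sq_nonneg σ₂⟩)) =
      δ * Real.exp (-(μ₁ - μ₂) ^ 2 / (δ ^ 2 + 2 * σ₁ ^ 2 + 2 * σ₂ ^ 2)) /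
        Real.sqrt (δ ^ 2 + 2 * σ₁ ^ 2 + 2 * σ₂ ^ 2) := by
  refine (integral_exp_neg_sq_sub_div_gaussianReal_prod μ₁ μ₂ _ _ (pow_pos hδ 2)).trans ?_
  show √(δ ^ 2 / (δ ^ 2 + 2 * σ₁ ^ 2 + 2 * σ₂ ^ 2)) *
    exp (-(μ₁ - μ₂) ^ 2 / (δ ^ 2 + 2 * σ₁ ^ 2 + 2 * σ₂ ^ 2)) = _
  rw [sqrt_div (sq_nonneg δ), sqrt_sq hδ.le]
  ring

/-- For independent x₁ ~ N(μ₁, σ₁²), x₂ ~ N(μ₂, σ₂²) and any δ > 0,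
E[exp(−(x₁−x₂)²/δ²)] = δ·exp(−(μ₁−μ₂)²/(δ²+2σ₁²+2σ₂²))/√(δ²+2σ₁²+2σ₂²). -/
theorem gaussian_expectation_rbf (μ₁ μ₂ σ₁ σ₂ δ : ℝ)
    (hσ₁ : 0 < σ₁) (hσ₂ : 0 < σ₂) (hδ : 0 < δ) :
    ∫ p : ℝ × ℝ, Real.exp (-(p.1 - p.2) ^ 2 / δ ^ 2)
        ∂((gaussianReal μ₁ ⟨σ₁ ^ 2, sq_nonneg σ₁⟩).prod
          (gaussianReal μ₂ ⟨σ₂ ^ 2, sq_nonneg σ₂⟩)) =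
      δ * Real.exp (-(μ₁ - μ₂) ^ 2 / (δ ^ 2 + 2 * σ₁ ^ 2 + 2 * σ₂ ^ 2)) /
        Real.sqrt (δ ^ 2 + 2 * σ₁ ^ 2 + 2 * σ₂ ^ 2) :=
  gaussian_expectation_rbf_general μ₁ μ₂ σ₁ σ₂ δ hδ
end

section
/- For any real f, the sigmoid admits the Pólya-Gamma integral representation: σ(f) = (1/2)·e^{f/2}·∫₀^∞ e^{−ξ f²/2} p_PG(ξ|1,0) dξ, where p_PG(·|1,0) is the density of the Pólya-Gamma PG(1,0) distribution, whose Laplace transform satisfies ∫₀^∞ e^{−ξ t} p_PG(ξ|1,0) dξ = cosh(√(t/2))^{−1} for t ≥ 0. -/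
open MeasureTheory

/-- The logistic sigmoid σ(x) = 1/(1+exp(−x)). -/
noncomputable def logistic (x : ℝ) : ℝ := 1 / (1 + Real.exp (-x))

/-! Multiplying numerator and denominator of `1 / (1 + e^{-f})` by `e^{f/2}` gives
`σ(f) = e^{f/2} / (2 cosh (f/2))`, and `1 / cosh (f/2)` is the PG(1,0) Laplace transform
evaluated at `t = f² / 2`. -/

theorem logistic_eq_exp_half_div_cosh_half (f : ℝ) :
    logistic f = 1 / 2 * Real.exp (f / 2) * (1 / Real.cosh (f / 2)) := by
  have hexp : Real.exp (-f) * Real.exp (f / 2) = Real.exp (-(f / 2)) := by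
    rw [← Real.exp_add]; ring_nf
  have hden : 0 < 1 + Real.exp (-f) := by positivity
  rw [logistic, Real.cosh_eq]
  field_simp
  linear_combination -hexp

theorem cosh_sqrt_sq_div_two_div_two (f : ℝ) :
    Real.cosh (Real.sqrt (f ^ 2 / 2 / 2)) = Real.cosh (f / 2) := by
  rw [show f ^ 2 / 2 / 2 = (f / 2) ^ 2 by ring, Real.sqrt_sq_eq_abs, Real.cosh_abs]

theorem sigmoid_polya_gamma_representation_general (pPG : ℝ → ℝ)
    (hLaplace : ∀ t : ℝ, 0 ≤ t →
      ∫ ξ in Set.Ioi (0 : ℝ), Real.exp (-ξ * t) * pPG ξ =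
        1 / Real.cosh (Real.sqrt (t / 2))) :
    ∀ f : ℝ,
      logistic f =
        (1 / 2) * Real.exp (f / 2) *
          ∫ ξ in Set.Ioi (0 : ℝ), Real.exp (-ξ * f ^ 2 / 2) * pPG ξ := by
  intro f
  have hLaplace_f := hLaplace (f ^ 2 / 2) (by positivity)
  rw [cosh_sqrt_sq_div_two_div_two] at hLaplace_f
  simp_rw [mul_div_assoc, hLaplace_f]
  exact logistic_eq_exp_half_div_cosh_half f

/-- Pólya-Gamma integral representation of the sigmoid: if `pPG` is the density
of the PG(1,0) distribution on (0,∞), whose Laplace transform is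
∫₀^∞ e^{−ξt} p_PG(ξ) dξ = 1/cosh(√(t/2)) for t ≥ 0, then
σ(f) = (1/2)·e^{f/2}·∫₀^∞ e^{−ξ f²/2} p_PG(ξ) dξ for every real f. -/
theorem sigmoid_polya_gamma_representation (pPG : ℝ → ℝ)
    (hnonneg : ∀ ξ, 0 ≤ pPG ξ)
    (hLaplace : ∀ t : ℝ, 0 ≤ t →
      ∫ ξ in Set.Ioi (0 : ℝ), Real.exp (-ξ * t) * pPG ξ =
        1 / Real.cosh (Real.sqrt (t / 2))) :
    ∀ f : ℝ,
      logistic f =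
        (1 / 2) * Real.exp (f / 2) *
          ∫ ξ in Set.Ioi (0 : ℝ), Real.exp (-ξ * f ^ 2 / 2) * pPG ξ :=
  sigmoid_polya_gamma_representation_general pPG hLaplace
end
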